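/- arXiv:0910.0635 — 3 statements merged into one kernel-verified Lean document; each statement's English description precedes it below -/
import Mathlib

section
/- For an odd prime p = 2q+1 and a natural number k coprime to p, the product over j = 1 to q of sin(jkπ/p) equals (-1)^((k-1)(p²-1)/8) · (k/p) · 2^(−q) · √p, where (k/p) is the Legendre symbol. If p divides k, the product is 0. -/
/-!
Reducing `j k` modulo `p` to the residue `r_j` of least absolute value turns each factor
`sin (j k π / p)` into `(-1) ^ ⌊j k / p⌋ * sin (|r_j| π / p)`, and, as in Gauss's lemma, the
`|r_j|` run over `1, …, q`. What remains is `∏ sin (j π / p) = √p / 2 ^ q`, which follows from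
`∏_{0 < j < p} (1 - ζ ^ j) = p` for a primitive `p`-th root of unity `ζ` and the symmetry
`j ↦ p - j`, and the sign `(-1) ^ ∑ ⌊j k / p⌋`, which is Eisenstein's lemma (applied to
`k + p` when `k` is even).
-/

open Finset Polynomial Real

theorem IsPrimitiveRoot.prod_X_sub_C_pow {R : Type*} [CommRing R] [IsDomain R] {ζ : R} {n : ℕ}
    (hn : 0 < n) (hζ : IsPrimitiveRoot ζ n) :
    ∏ j ∈ range n, (X - C (ζ ^ j)) = X ^ n - 1 := by
  have hroots : (X ^ n - C (1 : R)).roots = (Multiset.range n).map (ζ ^ ·) := by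
    simpa [nthRoots] using hζ.nthRoots_eq (one_pow n)
  have hcard : Multiset.card (X ^ n - C (1 : R)).roots = (X ^ n - C (1 : R)).natDegree := by
    rw [hroots, Multiset.card_map, Multiset.card_range, natDegree_X_pow_sub_C]
  rw [← C_1,
    ← prod_multiset_X_sub_C_of_monic_of_roots_card_eq (monic_X_pow_sub_C 1 hn.ne') hcard,
    hroots, Multiset.map_map]
  rfl

theorem IsPrimitiveRoot.prod_one_sub_pow {R : Type*} [CommRing R] [IsDomain R] {ζ : R} {n : ℕ}
    (hn : 0 < n) (hζ : IsPrimitiveRoot ζ n) :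
    ∏ j ∈ Ico 1 n, (1 - ζ ^ j) = n := by
  have h : (X - C 1) * ∏ j ∈ Ico 1 n, (X - C (ζ ^ j)) =
      (X - 1) * ∑ i ∈ range n, X ^ i := by
    rw [mul_geom_sum, ← hζ.prod_X_sub_C_pow hn, range_eq_Ico, prod_eq_prod_Ico_succ_bot hn,
      pow_zero]
  rw [C_1] at h
  simpa [eval_prod] using congrArg (eval 1) (mul_left_cancel₀ (X_sub_C_ne_zero 1) h)

theorem Real.sin_nat_mul_pi_div_pos {j n : ℕ} (hj : 0 < j) (hjn : j < n) :
    0 < sin (j * π / n) := by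
  have hn : (0 : ℝ) < n := by exact_mod_cast hj.trans hjn
  have hj : (0 : ℝ) < j := by exact_mod_cast hj
  apply sin_pos_of_pos_of_lt_pi (by positivity)
  rw [div_lt_iff₀ hn, mul_comm]
  exact mul_lt_mul_of_pos_left (by exact_mod_cast hjn) pi_pos

theorem Real.prod_two_mul_sin_mul_pi_div {n : ℕ} (hn : 0 < n) :
    ∏ j ∈ Ico 1 n, 2 * sin (j * π / n) = n := by
  have hnorm := congrArg (‖·‖) ((Complex.isPrimitiveRoot_exp n hn.ne').prod_one_sub_pow hn)
  simp only [norm_prod, Complex.norm_natCast] at hnorm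
  refine Eq.trans (prod_congr rfl fun j hj => ?_) hnorm
  have hsin := sin_nat_mul_pi_div_pos (mem_Ico.mp hj).1 (mem_Ico.mp hj).2
  have harg : (j : ℂ) * (2 * π * Complex.I / n) = Complex.I * ((2 * (j * π / n) : ℝ)) := by
    push_cast
    ring
  rw [← Complex.exp_nat_mul, norm_sub_rev, harg, Complex.norm_exp_I_mul_ofReal_sub_one,
    mul_div_cancel_left₀ _ two_ne_zero, Real.norm_eq_abs, abs_of_pos (mul_pos two_pos hsin)]

theorem Real.prod_Icc_sin_mul_pi_div (q : ℕ) :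
    ∏ j ∈ Icc 1 q, sin (j * π / (2 * q + 1 : ℕ)) = √(2 * q + 1 : ℕ) / 2 ^ q := by
  set p := 2 * q + 1
  set f : ℕ → ℝ := fun j => 2 * sin (j * π / p)
  have hreflect : ∏ j ∈ Ico (q + 1) p, f j = ∏ j ∈ Ico 1 (q + 1), f j := by
    have h := prod_Ico_reflect f 1 (m := q + 1) (n := p) (by omega)
    rw [show p + 1 - (q + 1) = q + 1 by omega, show p + 1 - 1 = p by omega] at h
    rw [← h]
    refine prod_congr rfl fun j hj => ?_
    have hjp : j ≤ p := by have := (mem_Ico.mp hj).2; omega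
    simp only [f, Nat.cast_sub hjp, sub_mul, sub_div,
      mul_div_cancel_left₀ _ (by positivity : (p : ℝ) ≠ 0), sin_pi_sub]
  have hsq : (∏ j ∈ Icc 1 q, f j) ^ 2 = p := by
    rw [sq, ← Ico_add_one_right_eq_Icc]
    nth_rw 2 [← hreflect]
    rw [prod_Ico_consecutive _ (by omega) (by omega)]
    exact prod_two_mul_sin_mul_pi_div (by omega)
  have hpos : 0 < ∏ j ∈ Icc 1 q, f j := prod_pos fun j hj =>
    mul_pos two_pos <|
      sin_nat_mul_pi_div_pos (mem_Icc.mp hj).1 (by have := (mem_Icc.mp hj).2; omega)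
  have hroot : ∏ j ∈ Icc 1 q, f j = √p := by rw [← hsq, sqrt_sq hpos.le]
  rw [eq_div_iff (by positivity), ← hroot, prod_mul_distrib, prod_const, Nat.card_Icc,
    Nat.add_sub_cancel, mul_comm]

theorem Real.sin_nat_mul_pi_div_eq_neg_one_pow_mul (p n : ℕ) [NeZero p] :
    sin (n * π / p) = (-1) ^ (n / p) * sin ((n : ZMod p).valMinAbs.natAbs * π / p) := by
  have hp : (p : ℝ) ≠ 0 := NeZero.ne _
  have hshift : sin (n * π / p) = (-1) ^ (n / p) * sin ((n % p : ℕ) * π / p) := by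
    rw [← sin_add_nat_mul_pi]
    congr 1
    conv_lhs => rw [← Nat.mod_add_div n p]
    push_cast
    field_simp
  rw [hshift, ZMod.valMinAbs_natAbs_eq_min, ZMod.val_natCast]
  rcases min_cases (n % p) (p - n % p) with ⟨h, -⟩ | ⟨h, -⟩
  · rw [h]
  · rw [h, Nat.cast_sub (Nat.mod_lt n (NeZero.pos p)).le, sub_mul, sub_div,
      mul_div_cancel_left₀ _ hp, sin_pi_sub]

theorem ZMod.prod_Ico_natAbs_valMinAbs_mul {M : Type*} [CommMonoid M] (p : ℕ) [Fact p.Prime]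
    {a : ZMod p} (ha : a ≠ 0) (f : ℕ → M) :
    ∏ x ∈ Ico 1 (p / 2).succ, f (a * x).valMinAbs.natAbs = ∏ x ∈ Ico 1 (p / 2).succ, f x := by
  have h := congrArg (fun s => (s.map f).prod) (Ico_map_valMinAbs_natAbs_eq_Ico_map_id p a ha)
  simp only [Multiset.map_map, Function.comp_def, Multiset.map_id'] at h
  exact h

theorem Real.prod_Ico_sin_mul_mul_pi_div (p : ℕ) [Fact p.Prime] {a : ℕ}
    (ha : (a : ZMod p) ≠ 0) :
    ∏ x ∈ Ico 1 (p / 2).succ, sin (x * a * π / p) =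
      (-1) ^ (∑ x ∈ Ico 1 (p / 2).succ, x * a / p) *
        ∏ x ∈ Ico 1 (p / 2).succ, sin (x * π / p) := by
  rw [← prod_pow_eq_pow_sum,
    ← ZMod.prod_Ico_natAbs_valMinAbs_mul p ha (fun x : ℕ => sin (x * π / p)), ← prod_mul_distrib]
  refine prod_congr rfl fun x _ => ?_
  rw [← Nat.cast_mul (α := ℝ), sin_nat_mul_pi_div_eq_neg_one_pow_mul, Nat.cast_mul (α := ZMod p),
    mul_comm (x : ZMod p)]

theorem Nat.sq_sub_one_eq_eight_mul_sum_Ico {p : ℕ} (hp : p % 2 = 1) :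
    p ^ 2 - 1 = 8 * ∑ x ∈ Ico 1 (p / 2).succ, x := by
  have hsum := sum_range_id_mul_two (p / 2).succ
  rw [range_eq_Ico, sum_eq_sum_Ico_succ_bot (Nat.succ_pos _), zero_add,
    Nat.succ_sub_one] at hsum
  have hp : p = 2 * (p / 2) + 1 := by omega
  generalize ∑ x ∈ Ico 1 (p / 2).succ, x = T at hsum ⊢
  generalize p / 2 = m at hsum hp
  subst hp
  rw [Nat.sub_eq_of_eq_add]
  nlinarith

theorem ZMod.legendreSym_eq_neg_one_pow_add_sum {p : ℕ} [Fact p.Prime] (hp : p ≠ 2) {a : ℕ}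
    (ha : (a : ZMod p) ≠ 0) :
    legendreSym p a =
      (-1) ^ ((a - 1) * (p ^ 2 - 1) / 8 + ∑ x ∈ Ico 1 (p / 2).succ, x * a / p) := by
  have ha1 : 1 ≤ a := Nat.one_le_iff_ne_zero.mpr (by rintro rfl; simp at ha)
  have hp2 : p % 2 = 1 := (Nat.Prime.mod_two_eq_one_iff_ne_two Fact.out).mpr hp
  rw [Nat.sq_sub_one_eq_eight_mul_sum_Ico hp2, mul_left_comm,
    Nat.mul_div_cancel_left _ (by norm_num), pow_add, pow_mul]
  rcases Nat.even_or_odd a with ha2 | ha2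
  · have hodd : (a + p) % 2 = 1 := by rcases ha2 with ⟨b, rfl⟩; omega
    have hsum : ∑ x ∈ Ico 1 (p / 2).succ, x * (a + p) / p =
        ∑ x ∈ Ico 1 (p / 2).succ, x * a / p + ∑ x ∈ Ico 1 (p / 2).succ, x := by
      rw [← sum_add_distrib]
      refine sum_congr rfl fun x _ => ?_
      rw [mul_add, Nat.add_mul_div_right _ _ (by omega)]
    have h := eisenstein_lemma hp hodd (by simpa using ha)
    rw [hsum, pow_add, legendreSym.mod, Nat.cast_add, Int.add_emod_right, ← legendreSym.mod] at h
    rw [h, (Nat.Even.sub_odd ha1 ha2 odd_one).neg_one_pow, mul_comm]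
  · rw [(Nat.Odd.sub_odd ha2 odd_one).neg_one_pow, one_pow, one_mul]
    exact eisenstein_lemma hp (Nat.odd_iff.mp ha2) ha

theorem sin_product_legendre_general (p q k : ℕ) [Fact p.Prime] (hpq : p = 2 * q + 1) :
    (Nat.Coprime k p →
      ∏ j ∈ Finset.Icc 1 q, Real.sin (j * k * Real.pi / p) =
        (-1) ^ (((k - 1) * (p ^ 2 - 1)) / 8) * (legendreSym p k : ℝ) *
          (2 : ℝ) ^ (-(q : ℤ)) * Real.sqrt p) ∧
    (p ∣ k → ∏ j ∈ Finset.Icc 1 q, Real.sin (j * k * Real.pi / p) = 0) := by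
  have hq : 1 ≤ q := by have := (Fact.out : p.Prime).two_le; omega
  subst hpq
  have hIcc : Icc 1 q = Ico 1 ((2 * q + 1) / 2).succ := by
    rw [show (2 * q + 1) / 2 = q by omega, Nat.succ_eq_add_one, Ico_add_one_right_eq_Icc]
  refine ⟨fun hcop => ?_, fun ⟨m, hm⟩ => ?_⟩
  · have ha : (k : ZMod (2 * q + 1)) ≠ 0 := by
      rw [Ne, ZMod.natCast_eq_zero_iff]
      exact (Nat.Prime.coprime_iff_not_dvd Fact.out).mp hcop.symm
    rw [hIcc, prod_Ico_sin_mul_mul_pi_div _ ha,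
      ZMod.legendreSym_eq_neg_one_pow_add_sum (by omega) ha, ← hIcc, prod_Icc_sin_mul_pi_div]
    push_cast
    rw [pow_add, zpow_neg, zpow_natCast, ← mul_assoc, ← pow_add, ← two_mul, pow_mul, neg_one_sq,
      one_pow, one_mul]
    ring
  · refine prod_eq_zero (i := 1) (mem_Icc.mpr ⟨le_rfl, hq⟩) ?_
    rw [hm, show ((1 : ℕ) : ℝ) * ((2 * q + 1) * m : ℕ) * π / (2 * q + 1 : ℕ) = m * π by
      push_cast; field_simp]
    exact sin_nat_mul_pi m

theorem sin_product_legendre (p q k : ℕ) [Fact p.Prime] (hpq : p = 2 * q + 1)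
    (hk : 0 < k) :
    (Nat.Coprime k p →
      ∏ j ∈ Finset.Icc 1 q, Real.sin (j * k * Real.pi / p) =
        (-1) ^ (((k - 1) * (p ^ 2 - 1)) / 8) * (legendreSym p k : ℝ) *
          (2 : ℝ) ^ (-(q : ℤ)) * Real.sqrt p) ∧
    (p ∣ k → ∏ j ∈ Finset.Icc 1 q, Real.sin (j * k * Real.pi / p) = 0) :=
  sin_product_legendre_general p q k hpq
end

section
/- For an odd prime p and a natural number ℓ with 0 ≤ ℓ ≤ p−1, the sum over j from 1 to p−1 of ((ℓ+j)/p)·j equals p·Σ_{j=1}^{ℓ−1} (j/p) + Σ_{j=1}^{p−1} (j/p)·j, where (·/p) is the Legendre symbol. -/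
/-!
Write `S l = ∑_{0 ≤ j < p} ((l + j)/p) j`. Peeling the first and the last term off
`∑_{0 ≤ j ≤ p} ((l + j)/p) j` gives `S (l + 1) = S l + p (l/p) - ∑_{0 ≤ j < p} ((l + 1 + j)/p)`,
and the last sum vanishes because the Legendre symbol is `p`-periodic with zero sum over a
period (this is where `p` odd is needed). Summing the recursion from `S 0` gives the theorem.
-/

open Finset

namespace Function.Periodic

section AddCommGroup

variable {G : Type*} [AddCommGroup G] {f : ℤ → G} {N : ℕ}

theorem sum_range_add_one (hf : Periodic f N) (a : ℤ) :
    ∑ j ∈ range N, f (a + 1 + j) = ∑ j ∈ range N, f (a + j) := by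
  have h := (sum_range_succ (fun j : ℕ => f (a + j)) N).symm.trans
    (sum_range_succ' (fun j : ℕ => f (a + j)) N)
  simp only [Nat.cast_add, Nat.cast_one, Nat.cast_zero, add_zero, hf a] at h
  exact (sum_congr rfl fun j _ => by ring_nf).trans (add_right_cancel h).symm

theorem sum_range_add (hf : Periodic f N) (a : ℤ) :
    ∑ j ∈ range N, f (a + j) = ∑ j ∈ range N, f j := by
  induction a using Int.induction_on with
  | zero => simp
  | succ a ih => rw [hf.sum_range_add_one, ih]
  | pred a ih => rw [← ih, ← hf.sum_range_add_one, sub_add_cancel]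

end AddCommGroup

variable {R : Type*} [CommRing R] {f : ℤ → R} {N : ℕ}

theorem sum_range_add_one_mul (hf : Periodic f N) (hsum : ∑ j ∈ range N, f j = 0) (a : ℤ) :
    ∑ j ∈ range N, f (a + 1 + j) * j = ∑ j ∈ range N, f (a + j) * j + N * f a := by
  have h := (sum_range_succ (fun j : ℕ => f (a + j) * j) N).symm.trans
    (sum_range_succ' (fun j : ℕ => f (a + j) * j) N)
  simp only [Nat.cast_add, Nat.cast_one, Nat.cast_zero, add_zero, mul_zero, hf a] at h
  have hshift : ∑ j ∈ range N, f (a + 1 + j) = 0 := by rw [hf.sum_range_add, hsum]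
  have hsplit : ∑ j ∈ range N, f (a + (j + 1)) * (j + 1) =
      ∑ j ∈ range N, f (a + 1 + j) * j + ∑ j ∈ range N, f (a + 1 + j) := by
    rw [← sum_add_distrib]; exact sum_congr rfl fun j _ => by ring_nf
  linear_combination h.symm - hsplit - hshift

theorem sum_range_natCast_add_mul (hf : Periodic f N) (hsum : ∑ j ∈ range N, f j = 0) (l : ℕ) :
    ∑ j ∈ range N, f (l + j) * j = N * ∑ j ∈ range l, f j + ∑ j ∈ range N, f j * j := by
  induction l with
  | zero => simp
  | succ l ih =>
    rw [Nat.cast_succ, hf.sum_range_add_one_mul hsum, ih, sum_range_succ]; ring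

end Function.Periodic

theorem sum_Icc_one_pred_eq_sum_range {M : Type*} [AddCommMonoid M] {g : ℕ → M} (hg : g 0 = 0)
    (n : ℕ) : ∑ j ∈ Icc 1 (n - 1), g j = ∑ j ∈ range n, g j := by
  refine sum_subset (fun j hj => by simp at hj ⊢; omega) fun j hj hj' => ?_
  obtain rfl : j = 0 := by simp at hj hj'; omega
  exact hg

theorem legendreSym.periodic (p : ℕ) [Fact p.Prime] : Function.Periodic (legendreSym p) p := by
  intro a
  rw [legendreSym.mod p (a + p), Int.add_emod_right, ← legendreSym.mod]

theorem legendreSym.sum_range_eq_zero (p : ℕ) [Fact p.Prime] (hp : p ≠ 2) :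
    ∑ j ∈ range p, legendreSym p j = 0 := by
  have hchar : ringChar (ZMod p) ≠ 2 := by rwa [ZMod.ringChar_zmod_n]
  rw [← quadraticChar_sum_zero hchar]
  obtain ⟨n, rfl⟩ : ∃ n, p = n + 1 := Nat.exists_eq_succ_of_ne_zero (NeZero.ne p)
  rw [← Fin.sum_univ_eq_sum_range]
  refine sum_congr rfl fun i _ => ?_
  simp only [legendreSym, Int.cast_natCast]
  exact congrArg _ (ZMod.natCast_zmod_val (n := n + 1) i)

theorem legendre_weighted_sum_plus_general (p : ℕ) [Fact p.Prime] (hodd : Odd p)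
    (l : ℕ) :
    ∑ j ∈ Finset.Icc 1 (p - 1), legendreSym p ((l : ℤ) + j) * j =
      (p : ℤ) * ∑ j ∈ Finset.Icc 1 (l - 1), legendreSym p j +
        ∑ j ∈ Finset.Icc 1 (p - 1), legendreSym p j * j := by
  have hp : p ≠ 2 := by rintro rfl; exact Nat.not_odd_iff_even.mpr even_two hodd
  simp only [sum_Icc_one_pred_eq_sum_range (g := fun j : ℕ => legendreSym p ((l : ℤ) + j) * j)
      (by simp), sum_Icc_one_pred_eq_sum_range (g := fun j : ℕ => legendreSym p j * j) (by simp),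
    sum_Icc_one_pred_eq_sum_range (g := fun j : ℕ => legendreSym p j) (by simp)]
  exact (legendreSym.periodic p).sum_range_natCast_add_mul (legendreSym.sum_range_eq_zero p hp) l

theorem legendre_weighted_sum_plus (p : ℕ) [Fact p.Prime] (hodd : Odd p)
    (l : ℕ) (hl : l ≤ p - 1) :
    ∑ j ∈ Finset.Icc 1 (p - 1), legendreSym p ((l : ℤ) + j) * j =
      (p : ℤ) * ∑ j ∈ Finset.Icc 1 (l - 1), legendreSym p j +
        ∑ j ∈ Finset.Icc 1 (p - 1), legendreSym p j * j :=
  legendre_weighted_sum_plus_general p hodd l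
end

section
/- Let p = 2q+1 be an odd prime and l a natural number. Then Σ_{k=0}^{p-1} (−1)^k (k/p) e^((2l+1)πik/p) = p·((q−l)/p)/G(1,p), where G(1,p) = Σ_{k=0}^{p−1}(k/p)e^(2πik/p) is the quadratic Gauss sum and (·/p) the Legendre symbol. -/
open Finset Complex

/-!
Since `(-1)^k = e^(πik)` and `p = 2q+1`, the `k`-th summand is `(k/p) e^(2πi(l+q+1)k/p)`, so the
sum is the Gauss sum twisted by `a = l+q+1 ≡ -(q-l) (mod p)`. For a quadratic character this twist
only multiplies the Gauss sum `G` by `(a/p)`, and `(a/p) G = (a/p) G² / G = (-a/p) p / G` because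
`G² = (-1/p) p`.
-/

lemma sum_range_eq_sum_zmod {M : Type*} [AddCommMonoid M] (N : ℕ) [NeZero N] (f : ZMod N → M) :
    ∑ k ∈ range N, f k = ∑ a : ZMod N, f a :=
  sum_nbij' (↑) ZMod.val (by simp) (by simp [ZMod.val_lt])
    (fun _ hk ↦ ZMod.val_cast_of_lt (mem_range.mp hk)) (fun a _ ↦ ZMod.natCast_zmod_val a)
    (fun _ _ ↦ rfl)

section GaussSum

variable {F R : Type*} [Field F] [Fintype F] [Field R] {χ : MulChar F R}

lemma gaussSum_mulShift_of_isQuadratic (hχ₁ : χ ≠ 1) (hχ₂ : χ.IsQuadratic) (ψ : AddChar F R)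
    (a : F) : gaussSum χ (ψ.mulShift a) = χ a * gaussSum χ ψ := by
  rcases eq_or_ne a 0 with rfl | ha
  · rw [AddChar.mulShift_zero, gaussSum_one_right hχ₁, MulChar.map_zero, zero_mul]
  · simpa [hχ₂.inv] using gaussSum_mulShift_eq χ ψ (Units.mk0 a ha)

lemma gaussSum_mulShift_eq_card_mul_div (hχ₁ : χ ≠ 1) (hχ₂ : χ.IsQuadratic) {ψ : AddChar F R}
    (hψ : ψ.IsPrimitive) (hF : (Fintype.card F : R) ≠ 0) (a : F) :
    gaussSum χ (ψ.mulShift a) = Fintype.card F * χ (-a) / gaussSum χ ψ := by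
  rw [eq_div_iff (gaussSum_ne_zero_of_nontrivial hF hχ₁ hψ),
    gaussSum_mulShift_of_isQuadratic hχ₁ hχ₂, mul_assoc, ← sq, gaussSum_sq hχ₁ hχ₂ hψ,
    neg_eq_neg_one_mul a, map_mul]
  ring

end GaussSum

section Legendre

variable (p : ℕ) [Fact p.Prime]

noncomputable abbrev legendreChar : MulChar (ZMod p) ℂ :=
  (quadraticChar (ZMod p)).ringHomComp (Int.castRingHom ℂ)

lemma legendreChar_intCast (n : ℤ) : legendreChar p n = legendreSym p n := by
  simp [legendreSym, MulChar.ringHomComp_apply]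

lemma legendreChar_ne_one (hp : p ≠ 2) : legendreChar p ≠ 1 :=
  (MulChar.ringHomComp_ne_one_iff (RingHom.injective_int _)).mpr <|
    quadraticChar_ne_one (by rwa [ZMod.ringChar_zmod_n])

lemma legendreChar_isQuadratic : (legendreChar p).IsQuadratic :=
  (quadraticChar_isQuadratic (ZMod p)).comp _

lemma sum_legendreSym_mul_exp_eq_gaussSum_mulShift (m : ℕ) :
    ∑ k ∈ range p, (legendreSym p k : ℂ) * exp (2 * Real.pi * I * (m * k) / p) =
      gaussSum (legendreChar p) (ZMod.stdAddChar.mulShift m) := by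
  rw [gaussSum, ← sum_range_eq_sum_zmod]
  refine sum_congr rfl fun k _ ↦ ?_
  have hψ := ZMod.stdAddChar_coe (N := p) ((m * k : ℕ) : ℤ)
  push_cast at hψ
  rw [AddChar.mulShift_apply, hψ, ← legendreChar_intCast, Int.cast_natCast]

end Legendre

lemma neg_one_pow_mul_exp_eq_exp {p q : ℕ} (hpq : p = 2 * q + 1) (l k : ℕ) :
    (-1 : ℂ) ^ k * exp ((2 * l + 1) * Real.pi * I * k / p) =
      exp (2 * Real.pi * I * ((l + q + 1 : ℕ) * k) / p) := by
  have hp : (p : ℂ) ≠ 0 := by rw [hpq]; norm_cast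
  rw [← exp_pi_mul_I, ← exp_nat_mul, ← exp_add]
  congr 1
  field_simp
  rw [hpq]; push_cast; ring

lemma intCast_sub_eq_neg_natCast_add_add_one {p q : ℕ} (hpq : p = 2 * q + 1) (l : ℕ) :
    (((q : ℤ) - l : ℤ) : ZMod p) = -((l + q + 1 : ℕ) : ZMod p) := by
  have h : ((2 * q + 1 : ℕ) : ZMod p) = 0 := hpq ▸ ZMod.natCast_self p
  push_cast at h ⊢
  linear_combination h

theorem alternating_gauss_sum (p q l : ℕ) [Fact p.Prime] (hpq : p = 2 * q + 1) :
    ∑ k ∈ Finset.range p, (-1 : ℂ) ^ k * (legendreSym p k : ℂ) *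
        Complex.exp ((2 * l + 1) * Real.pi * Complex.I * k / p) =
      (p : ℂ) * (legendreSym p ((q : ℤ) - l) : ℂ) /
        ∑ k ∈ Finset.range p, (legendreSym p k : ℂ) *
          Complex.exp (2 * Real.pi * Complex.I * k / p) := by
  have hχ₁ := legendreChar_ne_one p (by omega)
  have hp : (Fintype.card (ZMod p) : ℂ) ≠ 0 := by simp [ZMod.card, NeZero.ne p]
  calc _ = ∑ k ∈ range p, (legendreSym p k : ℂ) *
          exp (2 * Real.pi * I * ((l + q + 1 : ℕ) * k) / p) :=
        sum_congr rfl fun k _ ↦ by rw [mul_right_comm, neg_one_pow_mul_exp_eq_exp hpq, mul_comm]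
    _ = gaussSum (legendreChar p) (ZMod.stdAddChar.mulShift (l + q + 1 : ℕ)) :=
        sum_legendreSym_mul_exp_eq_gaussSum_mulShift p _
    _ = p * legendreChar p (((q : ℤ) - l : ℤ)) / gaussSum (legendreChar p) ZMod.stdAddChar := by
        rw [gaussSum_mulShift_eq_card_mul_div hχ₁ (legendreChar_isQuadratic p)
          (ZMod.isPrimitive_stdAddChar p) hp, ZMod.card, intCast_sub_eq_neg_natCast_add_add_one hpq]
    _ = _ := by
        rw [legendreChar_intCast, ← AddChar.mulShift_one ZMod.stdAddChar,
          ← Nat.cast_one, ← sum_legendreSym_mul_exp_eq_gaussSum_mulShift]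
        simp only [Nat.cast_one, one_mul]
end
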